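/- There exists a constant C > 0 such that for all N ≥ 1, the Loring matrix e_N satisfies ‖e_N² − e_N‖ ≤ C/N, where ‖·‖ is the operator norm on 2N×2N complex matrices. -/

import Mathlib

/-!
Write `a, b, c` for the diagonal matrices `f(u_N), g(u_N), h(u_N)` and `v = v_N`. Using
`a² + b² + c² = a`, `bc = 0` and `v v* = 1`, the four blocks of `e_N² - e_N` are
`b v* c + c v b`, `c (a v - v a)`, `(v* a - a v*) c` and `v* c² v - c²`. Conjugating a diagonal
matrix by `v` shifts its entries by one step, so each block is a diagonal matrix times `v`, `v*`
or `1`, whose entries are products of a bounded sample with a difference of neighbouring samples,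
such as `b_k c_{k+1} = b_k (c_{k+1} - c_k)`. The Lipschitz hypotheses make these differences
`O(1/N)`, and the operator norm of the block matrix is at most the sum of the norms of its blocks.
-/

open Complex Real

/-- The cyclic shift Voiculescu unitary `v_N`, with `v_N δ_k = δ_{k+1 mod N}`. -/
def voicV (N : ℕ) : Matrix (Fin N) (Fin N) ℂ :=
  Matrix.of fun i j => if (i : ℕ) = ((j : ℕ) + 1) % N then 1 else 0

/-- `f(u_N)`: the diagonal matrix `diag (f (e^{2πik/N}))_{k=0}^{N-1}`. -/
noncomputable def diagF (f : ℂ → ℝ) (N : ℕ) : Matrix (Fin N) (Fin N) ℂ :=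
  Matrix.diagonal fun k => (f (Complex.exp (2 * Real.pi * Complex.I * k / N)) : ℂ)

/-- The Loring matrix `e_N` associated to the Voiculescu matrices `u_N, v_N`. -/
noncomputable def loringMatrix (f g h : ℂ → ℝ) (N : ℕ) :
    Matrix (Fin N ⊕ Fin N) (Fin N ⊕ Fin N) ℂ :=
  Matrix.fromBlocks
    (diagF f N) (diagF g N + diagF h N * voicV N)
    ((voicV N).conjTranspose * diagF h N + diagF g N) (1 - diagF f N)

/-- The operator norm of a matrix acting on the standard Hermitian space. -/
noncomputable def matOpNorm {n : Type*} [Fintype n] [DecidableEq n]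
    (M : Matrix n n ℂ) : ℝ :=
  ‖Matrix.toEuclideanCLM (𝕜 := ℂ) M‖

open Matrix
open scoped Matrix.Norms.L2Operator

namespace Matrix

section L2OpNorm

variable {𝕜 : Type*} [RCLike 𝕜] {l m n o : Type*} [Fintype l] [Fintype m] [Fintype n] [Fintype o]
  [DecidableEq n]

lemma l2_opNorm_fromRows_zero_right (X : Matrix m n 𝕜) :
    ‖fromRows X (0 : Matrix l n 𝕜)‖ = ‖X‖ := by
  have h := l2_opNorm_conjTranspose_mul_self (fromRows X (0 : Matrix l n 𝕜))
  rw [conjTranspose_fromRows_eq_fromCols_conjTranspose, fromCols_mul_fromRows, Matrix.mul_zero,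
    add_zero, l2_opNorm_conjTranspose_mul_self] at h
  exact (mul_self_inj (norm_nonneg _) (norm_nonneg _)).1 h.symm

lemma l2_opNorm_fromRows_zero_left (Y : Matrix l n 𝕜) :
    ‖fromRows (0 : Matrix m n 𝕜) Y‖ = ‖Y‖ := by
  have h := l2_opNorm_conjTranspose_mul_self (fromRows (0 : Matrix m n 𝕜) Y)
  rw [conjTranspose_fromRows_eq_fromCols_conjTranspose, fromCols_mul_fromRows, Matrix.mul_zero,
    zero_add, l2_opNorm_conjTranspose_mul_self] at h
  exact (mul_self_inj (norm_nonneg _) (norm_nonneg _)).1 h.symm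

lemma l2_opNorm_fromRows_le (X : Matrix m n 𝕜) (Y : Matrix l n 𝕜) :
    ‖fromRows X Y‖ ≤ ‖X‖ + ‖Y‖ := by
  have h : fromRows X Y = fromRows X (0 : Matrix l n 𝕜) + fromRows (0 : Matrix m n 𝕜) Y := by
    ext (i | i) j <;> simp
  rw [h, ← l2_opNorm_fromRows_zero_right (l := l) X,
    ← l2_opNorm_fromRows_zero_left (m := m) Y]
  exact norm_add_le _ _

lemma l2_opNorm_fromCols_le [DecidableEq l] [DecidableEq m] (X : Matrix m n 𝕜)
    (Y : Matrix m l 𝕜) : ‖fromCols X Y‖ ≤ ‖X‖ + ‖Y‖ := by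
  rw [← l2_opNorm_conjTranspose, conjTranspose_fromCols_eq_fromRows_conjTranspose,
    ← l2_opNorm_conjTranspose X, ← l2_opNorm_conjTranspose Y]
  exact l2_opNorm_fromRows_le _ _

lemma l2_opNorm_fromBlocks_le [DecidableEq l] [DecidableEq m] [DecidableEq o]
    (A : Matrix m n 𝕜) (B : Matrix m o 𝕜) (C : Matrix l n 𝕜) (D : Matrix l o 𝕜) :
    ‖fromBlocks A B C D‖ ≤ ‖A‖ + ‖B‖ + ‖C‖ + ‖D‖ := by
  rw [← fromRows_fromCols_eq_fromBlocks]
  linarith [l2_opNorm_fromRows_le (fromCols A B) (fromCols C D), l2_opNorm_fromCols_le A B,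
    l2_opNorm_fromCols_le C D]

lemma norm_diagonal_mul_le {d : n → 𝕜} {U : Matrix n n 𝕜} {δ : ℝ} (hδ : 0 ≤ δ)
    (hd : ∀ i, ‖d i‖ ≤ δ) (hU : ‖U‖ ≤ 1) : ‖diagonal d * U‖ ≤ δ :=
  calc ‖diagonal d * U‖ ≤ ‖diagonal d‖ * ‖U‖ := norm_mul_le _ _
    _ ≤ δ * 1 := by
      gcongr
      rw [l2_opNorm_diagonal]
      exact (pi_norm_le_iff_of_nonneg hδ).2 hd
    _ = δ := mul_one δ

end L2OpNorm

lemma permMatrix_mul_diagonal {n R : Type*} [Fintype n] [DecidableEq n] [NonAssocSemiring R]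
    (σ : Equiv.Perm n) (d : n → R) :
    σ.permMatrix R * diagonal d = diagonal (d ∘ σ) * σ.permMatrix R := by
  rw [PEquiv.toMatrix_toPEquiv_mul, PEquiv.mul_toMatrix_toPEquiv]
  ext i j
  simp [diagonal_apply, Equiv.eq_symm_apply]

end Matrix

section Shift

variable {N : ℕ} [NeZero N]

lemma voicV_eq_permMatrix : voicV N = Equiv.Perm.permMatrix ℂ (Equiv.subRight (1 : Fin N)) := by
  ext i j
  have hval : ((j + 1 : Fin N) : ℕ) = ((j : ℕ) + 1) % N := by
    rw [Fin.val_add, Fin.val_one', Nat.add_mod_mod]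
  simp only [voicV, of_apply, PEquiv.toMatrix_apply, Equiv.toPEquiv_apply, Option.mem_def,
    Option.some.injEq, Equiv.subRight_apply, sub_eq_iff_eq_add, ← hval, ← Fin.ext_iff]

lemma norm_voicV_le : ‖voicV N‖ ≤ 1 := by
  rw [voicV_eq_permMatrix]
  exact permMatrix_l2_opNorm_le _

lemma norm_conjTranspose_voicV_le : ‖(voicV N)ᴴ‖ ≤ 1 :=
  (l2_opNorm_conjTranspose _).trans_le norm_voicV_le

lemma voicV_mul_conjTranspose_voicV : voicV N * (voicV N)ᴴ = 1 := by
  rw [voicV_eq_permMatrix, conjTranspose_permMatrix, ← permMatrix_mul, inv_mul_cancel,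
    permMatrix_one]

lemma conjTranspose_voicV_mul_voicV : (voicV N)ᴴ * voicV N = 1 := by
  rw [voicV_eq_permMatrix, conjTranspose_permMatrix, ← permMatrix_mul, mul_inv_cancel,
    permMatrix_one]

lemma voicV_mul_diagonal (d : Fin N → ℂ) :
    voicV N * diagonal d = diagonal (fun i => d (i - 1)) * voicV N := by
  rw [voicV_eq_permMatrix, permMatrix_mul_diagonal]
  rfl

lemma conjTranspose_voicV_mul_diagonal (d : Fin N → ℂ) :
    (voicV N)ᴴ * diagonal d = diagonal (fun i => d (i + 1)) * (voicV N)ᴴ := by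
  rw [voicV_eq_permMatrix, conjTranspose_permMatrix, permMatrix_mul_diagonal]
  rfl

end Shift

lemma fromBlocks_mul_self_sub_self {n R : Type*} [Fintype n] [DecidableEq n] [Ring R]
    {a b c v w : Matrix n n R} (hsum : a * a + b * b + c * c = a) (hbc : b * c = 0)
    (hcb : c * b = 0) (hab : Commute a b) (hac : Commute a c) (hvw : v * w = 1) :
    fromBlocks a (b + c * v) (w * c + b) (1 - a) * fromBlocks a (b + c * v) (w * c + b) (1 - a) -
        fromBlocks a (b + c * v) (w * c + b) (1 - a) =
      fromBlocks (b * w * c + c * v * b) (c * (a * v - v * a)) ((w * a - a * w) * c)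
        (w * (c * c) * v - c * c) := by
  rw [fromBlocks_multiply, sub_eq_add_neg, fromBlocks_neg, fromBlocks_add]
  congr 1
  · calc _ = (a * a + b * b + c * c - a) + b * w * c + c * v * b + c * (v * w - 1) * c := by
          noncomm_ring
      _ = _ := by rw [hsum, hvw]; noncomm_ring
  · calc _ = (a * b - b * a) + (a * c - c * a) * v + c * (a * v - v * a) := by noncomm_ring
      _ = _ := by rw [hab.eq, hac.eq]; noncomm_ring
  · calc _ = w * (c * a - a * c) + (b * a - a * b) + (w * a - a * w) * c := by noncomm_ring
      _ = _ := by rw [hab.eq, hac.eq]; noncomm_ring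
  · calc _ = (a * a + b * b + c * c - a) + w * (c * b) + b * c * v + (w * (c * c) * v - c * c) := by
          noncomm_ring
      _ = _ := by rw [hsum, hcb, hbc]; noncomm_ring

lemma norm_mul_le_of_mul_eq_zero {R : Type*} [NormedDivisionRing R] {x y y' : R} {δ : ℝ}
    (hxy : x * y = 0) (hx : ‖x‖ ≤ 1) (hy : ‖y' - y‖ ≤ δ) : ‖x * y'‖ ≤ δ := by
  rcases mul_eq_zero.1 hxy with rfl | rfl
  · simpa using (norm_nonneg _).trans hy
  · rw [sub_zero] at hy
    calc ‖x * y'‖ = ‖x‖ * ‖y'‖ := norm_mul x y'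
      _ ≤ 1 * δ := by gcongr
      _ = δ := one_mul δ

section VoiculescuLoring

variable {N : ℕ} [NeZero N]

lemma diagonal_mul_voicV_mul_diagonal (d e : Fin N → ℂ) :
    diagonal d * voicV N * diagonal e = diagonal (fun i => d i * e (i - 1)) * voicV N := by
  rw [mul_assoc, voicV_mul_diagonal, ← mul_assoc, diagonal_mul_diagonal]

lemma diagonal_mul_conjTranspose_voicV_mul_diagonal (d e : Fin N → ℂ) :
    diagonal d * (voicV N)ᴴ * diagonal e = diagonal (fun i => d i * e (i + 1)) * (voicV N)ᴴ := by
  rw [mul_assoc, conjTranspose_voicV_mul_diagonal, ← mul_assoc, diagonal_mul_diagonal]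

variable {a b c : Fin N → ℂ} {δ : ℝ}

lemma norm_diagonal_mul_conjTranspose_voicV_mul_diagonal_add_le (hbc : ∀ i, b i * c i = 0)
    (hb : ∀ i, ‖b i‖ ≤ 1) (hc : ∀ i, ‖c (i + 1) - c i‖ ≤ δ) :
    ‖diagonal b * (voicV N)ᴴ * diagonal c + diagonal c * voicV N * diagonal b‖ ≤ δ + δ := by
  have hδ : 0 ≤ δ := (norm_nonneg _).trans (hc 0)
  rw [diagonal_mul_conjTranspose_voicV_mul_diagonal, diagonal_mul_voicV_mul_diagonal]
  refine (norm_add_le _ _).trans (add_le_add ?_ ?_)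
  · exact norm_diagonal_mul_le hδ (fun i => norm_mul_le_of_mul_eq_zero (hbc i) (hb i) (hc i))
      norm_conjTranspose_voicV_le
  · refine norm_diagonal_mul_le hδ (fun i => ?_) norm_voicV_le
    have := norm_mul_le_of_mul_eq_zero (hbc (i - 1)) (hb (i - 1)) (hc (i - 1))
    rwa [sub_add_cancel, mul_comm] at this

lemma norm_diagonal_mul_commutator_voicV_le (hc : ∀ i, ‖c i‖ ≤ 1)
    (ha : ∀ i, ‖a (i + 1) - a i‖ ≤ δ) :
    ‖diagonal c * (diagonal a * voicV N - voicV N * diagonal a)‖ ≤ δ := by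
  have hδ : 0 ≤ δ := (norm_nonneg _).trans (ha 0)
  rw [voicV_mul_diagonal, ← sub_mul, diagonal_sub, ← mul_assoc, diagonal_mul_diagonal]
  refine norm_diagonal_mul_le hδ (fun i => ?_) norm_voicV_le
  calc ‖c i * (a i - a (i - 1))‖ = ‖c i‖ * ‖a (i - 1 + 1) - a (i - 1)‖ := by
        rw [norm_mul, sub_add_cancel]
    _ ≤ 1 * δ := by gcongr; exacts [hc i, ha (i - 1)]
    _ = δ := one_mul δ

lemma norm_commutator_conjTranspose_voicV_mul_diagonal_le (hc : ∀ i, ‖c i‖ ≤ 1)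
    (ha : ∀ i, ‖a (i + 1) - a i‖ ≤ δ) :
    ‖((voicV N)ᴴ * diagonal a - diagonal a * (voicV N)ᴴ) * diagonal c‖ ≤ δ := by
  have hδ : 0 ≤ δ := (norm_nonneg _).trans (ha 0)
  rw [conjTranspose_voicV_mul_diagonal, ← sub_mul, diagonal_sub,
    diagonal_mul_conjTranspose_voicV_mul_diagonal]
  refine norm_diagonal_mul_le hδ (fun i => ?_) norm_conjTranspose_voicV_le
  calc ‖(a (i + 1) - a i) * c (i + 1)‖ = ‖a (i + 1) - a i‖ * ‖c (i + 1)‖ := norm_mul _ _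
    _ ≤ δ * 1 := by gcongr; exacts [ha i, hc (i + 1)]
    _ = δ := mul_one δ

lemma norm_conjTranspose_voicV_conj_sub_le (hc : ∀ i, ‖c i‖ ≤ 1)
    (hc' : ∀ i, ‖c (i + 1) - c i‖ ≤ δ) :
    ‖(voicV N)ᴴ * (diagonal c * diagonal c) * voicV N - diagonal c * diagonal c‖ ≤ 2 * δ := by
  have hδ : 0 ≤ δ := (norm_nonneg _).trans (hc' 0)
  rw [diagonal_mul_diagonal, conjTranspose_voicV_mul_diagonal, mul_assoc,
    conjTranspose_voicV_mul_voicV, mul_one, diagonal_sub, l2_opNorm_diagonal]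
  refine (pi_norm_le_iff_of_nonneg (by positivity)).2 fun i => ?_
  calc ‖c (i + 1) * c (i + 1) - c i * c i‖ = ‖c (i + 1) + c i‖ * ‖c (i + 1) - c i‖ := by
        rw [mul_self_sub_mul_self, norm_mul]
    _ ≤ (1 + 1) * δ := by
        gcongr
        exacts [(norm_add_le _ _).trans (add_le_add (hc _) (hc _)), hc' i]
    _ = 2 * δ := by ring

end VoiculescuLoring

noncomputable def loringMatrixOfDiag {N : ℕ} (a b c : Fin N → ℂ) :
    Matrix (Fin N ⊕ Fin N) (Fin N ⊕ Fin N) ℂ :=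
  fromBlocks (diagonal a) (diagonal b + diagonal c * voicV N)
    ((voicV N)ᴴ * diagonal c + diagonal b) (1 - diagonal a)

theorem norm_loringMatrixOfDiag_mul_self_sub_le {N : ℕ} [NeZero N] {a b c : Fin N → ℂ}
    {δa δc : ℝ} (hsum : ∀ i, a i * a i + b i * b i + c i * c i = a i)
    (hbc : ∀ i, b i * c i = 0) (hb : ∀ i, ‖b i‖ ≤ 1) (hc : ∀ i, ‖c i‖ ≤ 1)
    (ha_step : ∀ i, ‖a (i + 1) - a i‖ ≤ δa) (hc_step : ∀ i, ‖c (i + 1) - c i‖ ≤ δc) :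
    ‖loringMatrixOfDiag a b c * loringMatrixOfDiag a b c - loringMatrixOfDiag a b c‖ ≤
      2 * δa + 4 * δc := by
  have hsum' : diagonal a * diagonal a + diagonal b * diagonal b + diagonal c * diagonal c =
      diagonal a := by
    simp only [diagonal_mul_diagonal, diagonal_add, hsum]
  have hbc' : diagonal b * diagonal c = 0 := by
    simp only [diagonal_mul_diagonal, hbc, diagonal_zero]
  rw [loringMatrixOfDiag, fromBlocks_mul_self_sub_self hsum' hbc'
    ((commute_diagonal c b).eq.trans hbc') (commute_diagonal a b) (commute_diagonal a c)
    voicV_mul_conjTranspose_voicV]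
  calc _ ≤ _ := l2_opNorm_fromBlocks_le _ _ _ _
    _ ≤ (δc + δc) + δa + δa + 2 * δc := by
      gcongr
      · exact norm_diagonal_mul_conjTranspose_voicV_mul_diagonal_add_le hbc hb hc_step
      · exact norm_diagonal_mul_commutator_voicV_le hc ha_step
      · exact norm_commutator_conjTranspose_voicV_mul_diagonal_le hc ha_step
      · exact norm_conjTranspose_voicV_conj_sub_le hc hc_step
    _ = 2 * δa + 4 * δc := by ring

section CircleSample

noncomputable def circleSample (φ : ℂ → ℝ) (N : ℕ) (k : Fin N) : ℂ :=
  (φ (exp (2 * π * I * k / N)) : ℂ)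

lemma loringMatrix_eq_loringMatrixOfDiag (f g h : ℂ → ℝ) (N : ℕ) :
    loringMatrix f g h N =
      loringMatrixOfDiag (circleSample f N) (circleSample g N) (circleSample h N) :=
  rfl

lemma norm_exp_two_pi_I_mul_div (k N : ℕ) : ‖exp (2 * π * I * k / N)‖ = 1 := by
  rw [show 2 * π * I * k / N = ((2 * π * k / N : ℝ) : ℂ) * I by push_cast; ring]
  exact norm_exp_ofReal_mul_I _

lemma circleSample_eq {N : ℕ} (φ : ℂ → ℝ) (k : Fin N) :
    circleSample φ N k = φ (exp (2 * π * I * ((k / N : ℝ) : ℂ))) := by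
  rw [circleSample]
  push_cast
  ring_nf

lemma norm_circleSample_le_one {N : ℕ} {φ : ℂ → ℝ}
    (hφ : ∀ z : ℂ, ‖z‖ = 1 → φ z ∈ Set.Icc (0 : ℝ) 1) (k : Fin N) : ‖circleSample φ N k‖ ≤ 1 := by
  obtain ⟨h₀, h₁⟩ := hφ _ (norm_exp_two_pi_I_mul_div k N)
  rw [circleSample, Complex.norm_real, Real.norm_eq_abs, abs_le]
  exact ⟨by linarith, h₁⟩

variable {N : ℕ} [NeZero N]

lemma circleSample_add_one (φ : ℂ → ℝ) (k : Fin N) :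
    circleSample φ N (k + 1) = φ (exp (2 * π * I * (((k + 1 : ℕ) / N : ℝ) : ℂ))) := by
  have hN : (N : ℂ) ≠ 0 := Nat.cast_ne_zero.2 (NeZero.ne N)
  have hval : ((k + 1 : Fin N) : ℕ) = ((k : ℕ) + 1) % N := by
    rw [Fin.val_add, Fin.val_one', Nat.add_mod_mod]
  have hper : exp (2 * π * I * (((k : ℕ) + 1 : ℕ) : ℂ) / N) =
      exp (2 * π * I * ((((k : ℕ) + 1) % N : ℕ) : ℂ) / N) := by
    conv_lhs => rw [← Nat.mod_add_div ((k : ℕ) + 1) N]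
    rw [show 2 * π * I * (((((k : ℕ) + 1) % N + N * (((k : ℕ) + 1) / N) : ℕ)) : ℂ) / N =
        2 * π * I * ((((k : ℕ) + 1) % N : ℕ) : ℂ) / N + (((k : ℕ) + 1) / N : ℕ) * (2 * π * I) by
      push_cast; field_simp, Complex.exp_add, exp_nat_mul_two_pi_mul_I, mul_one]
  rw [circleSample, hval, ← hper]
  push_cast
  ring_nf

lemma norm_circleSample_add_one_sub_le {φ : ℂ → ℝ} {K : NNReal}
    (hLip : LipschitzOnWith K (fun x : ℝ => φ (exp (2 * π * I * x))) (Set.Icc 0 1))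
    (k : Fin N) : ‖circleSample φ N (k + 1) - circleSample φ N k‖ ≤ K / N := by
  have hN : (0 : ℝ) < N := Nat.cast_pos.2 (Nat.pos_of_ne_zero (NeZero.ne N))
  have hk : ((k : ℕ) : ℝ) + 1 ≤ N := by exact_mod_cast k.isLt
  have hmem : ∀ x : ℝ, 0 ≤ x → x ≤ N → x / N ∈ Set.Icc (0 : ℝ) 1 := fun x hx₀ hx₁ =>
    ⟨by positivity, (div_le_one hN).2 hx₁⟩
  rw [circleSample_add_one, circleSample_eq, ← Complex.ofReal_sub, Complex.norm_real,
    Real.norm_eq_abs, ← Real.dist_eq]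
  calc _ ≤ K * dist ((((k : ℕ) + 1 : ℕ) : ℝ) / N) (((k : ℕ) : ℝ) / N) :=
        hLip.dist_le_mul _ (hmem _ (by positivity) (by push_cast; exact hk)) _
          (hmem _ (by positivity) (by linarith))
    _ = K / N := by
        rw [Real.dist_eq, Nat.cast_succ, ← sub_div, add_sub_cancel_left, abs_of_pos (by positivity)]
        ring

end CircleSample

theorem loring_matrix_almost_idempotent_general
    (f g h : ℂ → ℝ)
    (hrange : ∀ z : ℂ, ‖z‖ = 1 →
      f z ∈ Set.Icc (0 : ℝ) 1 ∧ g z ∈ Set.Icc (0 : ℝ) 1 ∧ h z ∈ Set.Icc (0 : ℝ) 1)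
    (hsum : ∀ z : ℂ, ‖z‖ = 1 → (f z) ^ 2 + (g z) ^ 2 + (h z) ^ 2 = f z)
    (hgh : ∀ z : ℂ, ‖z‖ = 1 → g z * h z = 0)
    (hfLip : ∃ K : NNReal,
      LipschitzOnWith K (fun x : ℝ => f (Complex.exp (2 * Real.pi * Complex.I * x)))
        (Set.Icc (0 : ℝ) 1))
    (hhLip : ∃ K : NNReal,
      LipschitzOnWith K (fun x : ℝ => h (Complex.exp (2 * Real.pi * Complex.I * x)))
        (Set.Icc (0 : ℝ) 1)) :
    ∃ C > (0 : ℝ), ∀ N : ℕ, 1 ≤ N →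
      matOpNorm (loringMatrix f g h N * loringMatrix f g h N - loringMatrix f g h N) ≤
        C / N := by
  obtain ⟨Kf, hKf⟩ := hfLip
  obtain ⟨Kh, hKh⟩ := hhLip
  refine ⟨2 * Kf + 4 * Kh + 1, by positivity, fun N hN => ?_⟩
  have : NeZero N := ⟨by omega⟩
  have hz (k : Fin N) := norm_exp_two_pi_I_mul_div k N
  calc matOpNorm (loringMatrix f g h N * loringMatrix f g h N - loringMatrix f g h N)
      ≤ 2 * (Kf / N) + 4 * (Kh / N) := by
        rw [matOpNorm, ← cstar_norm_def, loringMatrix_eq_loringMatrixOfDiag]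
        refine norm_loringMatrixOfDiag_mul_self_sub_le (fun k => ?_) (fun k => ?_)
          (norm_circleSample_le_one fun z hz => (hrange z hz).2.1)
          (norm_circleSample_le_one fun z hz => (hrange z hz).2.2)
          (norm_circleSample_add_one_sub_le hKf) (norm_circleSample_add_one_sub_le hKh)
        · simp only [circleSample, ← sq, ← Complex.ofReal_pow, ← Complex.ofReal_add, hsum _ (hz k)]
        · rw [circleSample, circleSample, ← Complex.ofReal_mul, hgh _ (hz k), Complex.ofReal_zero]
    _ ≤ (2 * Kf + 4 * Kh + 1) / N := by
        rw [← mul_div_assoc, ← mul_div_assoc, ← add_div]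
        gcongr ?_ / _
        linarith

/-- There is `C > 0` such that `‖e_N² - e_N‖ ≤ C/N` for all `N ≥ 1`. -/
theorem loring_matrix_almost_idempotent
    (f g h : ℂ → ℝ)
    (hf : ContinuousOn f (Metric.sphere (0 : ℂ) 1))
    (hg : ContinuousOn g (Metric.sphere (0 : ℂ) 1))
    (hh : ContinuousOn h (Metric.sphere (0 : ℂ) 1))
    (hrange : ∀ z : ℂ, ‖z‖ = 1 →
      f z ∈ Set.Icc (0 : ℝ) 1 ∧ g z ∈ Set.Icc (0 : ℝ) 1 ∧ h z ∈ Set.Icc (0 : ℝ) 1)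
    (hsum : ∀ z : ℂ, ‖z‖ = 1 → (f z) ^ 2 + (g z) ^ 2 + (h z) ^ 2 = f z)
    (hgh : ∀ z : ℂ, ‖z‖ = 1 → g z * h z = 0)
    (hf1 : f 1 = 1) (hg1 : g 1 = 0) (hh1 : h 1 = 0)
    (hfLip : ∃ K : NNReal,
      LipschitzOnWith K (fun x : ℝ => f (Complex.exp (2 * Real.pi * Complex.I * x)))
        (Set.Icc (0 : ℝ) 1))
    (hgLip : ∃ K : NNReal,
      LipschitzOnWith K (fun x : ℝ => g (Complex.exp (2 * Real.pi * Complex.I * x)))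
        (Set.Icc (0 : ℝ) 1))
    (hhLip : ∃ K : NNReal,
      LipschitzOnWith K (fun x : ℝ => h (Complex.exp (2 * Real.pi * Complex.I * x)))
        (Set.Icc (0 : ℝ) 1)) :
    ∃ C > (0 : ℝ), ∀ N : ℕ, 1 ≤ N →
      matOpNorm (loringMatrix f g h N * loringMatrix f g h N - loringMatrix f g h N) ≤
        C / N :=
  loring_matrix_almost_idempotent_general f g h hrange hsum hgh hfLip hhLip
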